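/- Assume Assumptions (a) and (b) and let p_0 ∈ ℝ^{Z_m} be a maximizer of Ξ(p) := Ξ_μ(p) + Ξ_ν(−p). For each z ∈ Z_m let ζ(z) ∈ Z be a minimizer of ζ ↦ ∫_{A_z(p_0)} c¹(x,ζ) dμ(x) + ∫_{B_z(−p_0)} c²(ζ,y) dν(y), and let Z_m^{new} := {ζ(z) : z ∈ Z_m}. Then c^{Z_m^{new}}(μ,ν) ≤ c^{Z_m}(μ,ν). -/

import Mathlib

open MeasureTheory

/-- Kantorovich optimal transport cost between `μ` and `ν` for the cost `c`. -/
noncomputable def kant {X Y : Type*} [MeasurableSpace X] [MeasurableSpace Y]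
    (μ : Measure X) (ν : Measure Y) (c : X → Y → ℝ) : ℝ :=
  sInf {t : ℝ | ∃ π : Measure (X × Y), IsProbabilityMeasure π ∧
    π.map Prod.fst = μ ∧ π.map Prod.snd = ν ∧ t = ∫ q, c q.1 q.2 ∂π}

/-!
At a maximiser `p₀` of the dual objective `Ξ`, raising `p₀ z` by a small `t > 0` changes `Ξ` by at
least `t (μ (A_z) - ν (B_z))` up to boundary terms; the level-set assumptions make the boundaries
negligible, so optimality forces `μ (A_z) = ν (B_z)` for every `z`. Coupling `μ|A_z` with `ν|B_z`
as a normalised product for each `z` gives a transport plan. Its cost for the new centres is at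
most `∑_z (∫_{A_z} c¹(·, ζ z) dμ + ∫_{B_z} c²(ζ z, ·) dν)`, which by the choice of `ζ` is at most
the same sum with `z` in place of `ζ z`; the latter equals `Ξ(p₀)`, and `Ξ(p₀)` is below the old
optimal cost by weak duality.
-/

open Set Filter Function

namespace SemiDiscrete

lemma integrable_of_forall_abs_le {α : Type*} [MeasurableSpace α] {m : Measure α}
    [IsFiniteMeasure m] {φ : α → ℝ} (hφ : Measurable φ) (hb : ∃ M, ∀ a, |φ a| ≤ M) :
    Integrable φ m :=
  let ⟨M, hM⟩ := hb
  .of_bound hφ.aestronglyMeasurable M (ae_of_all _ hM)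

lemma abs_ciInf_le {ι : Type*} [Finite ι] [Nonempty ι] {g : ι → ℝ} {M : ℝ}
    (h : ∀ u, |g u| ≤ M) : |⨅ u, g u| ≤ M := by
  obtain ⟨u, hu⟩ := exists_eq_ciInf_of_finite (f := g)
  exact hu ▸ h u

section CTransform

variable {α ι : Type*} {f : α → ι → ℝ} {p q : ι → ℝ} {a : α} {z : ι}

/-- `cTransform f p` is the paper's `ξ¹(p, ·)` for `f x z = c¹(x, z)`, and `cell f p z` its
`A_z(p)`; with `g y z = c²(z, y)`, `cTransform g` and `cell g` give `ξ²` and `B_z`. -/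
noncomputable def cTransform (f : α → ι → ℝ) (p : ι → ℝ) (a : α) : ℝ := ⨅ u, f a u + p u

def cell (f : α → ι → ℝ) (p : ι → ℝ) (z : ι) : Set α := {a | f a z + p z = cTransform f p a}

lemma cell_inter_cell_subset (z u : ι) :
    cell f p z ∩ cell f p u ⊆ {a | f a z - f a u = p u - p z} := by
  rintro a ⟨hz, hu⟩
  change f a z + p z = _ at hz
  change f a u + p u = _ at hu
  change f a z - f a u = p u - p z
  linarith

variable [Finite ι]

lemma cTransform_le (u : ι) : cTransform f p a ≤ f a u + p u :=
  ciInf_le (finite_range _).bddBelow u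

lemma exists_cTransform_eq [Nonempty ι] (f : α → ι → ℝ) (p : ι → ℝ) (a : α) :
    ∃ u, cTransform f p a = f a u + p u :=
  (exists_eq_ciInf_of_finite (f := fun u => f a u + p u)).imp fun _ h => h.symm

lemma mem_cell_iff : a ∈ cell f p z ↔ ∀ u, f a z + p z ≤ f a u + p u := by
  have : Nonempty ι := ⟨z⟩
  refine ⟨fun h u => h.symm ▸ cTransform_le u, fun h => (cTransform_le z).antisymm' ?_⟩
  exact le_ciInf h

lemma exists_mem_cell [Nonempty ι] (f : α → ι → ℝ) (p : ι → ℝ) (a : α) : ∃ z, a ∈ cell f p z :=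
  (exists_cTransform_eq f p a).imp fun _ h => h.symm

lemma cTransform_add_cTransform_neg_le {β : Type*} [Nonempty ι] (g : β → ι → ℝ) (b : β) :
    cTransform f p a + cTransform g (-p) b ≤ ⨅ u, f a u + g b u := by
  refine le_ciInf fun u => ?_
  have hg : cTransform g (-p) b ≤ g b u - p u := cTransform_le u
  linarith [cTransform_le (f := f) (p := p) (a := a) u]

lemma cTransform_add_indicator_le (hpq : ∀ u ≠ z, p u ≤ q u) (a : α) :
    cTransform f p a + (cell f q z).indicator (fun _ => q z - p z) a ≤ cTransform f q a := by
  by_cases ha : a ∈ cell f q z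
  · have hq : f a z + q z = cTransform f q a := ha
    rw [indicator_of_mem ha, ← hq]
    linarith [cTransform_le (f := f) (p := p) (a := a) z]
  · have : Nonempty ι := ⟨z⟩
    obtain ⟨u, hu⟩ := exists_cTransform_eq f q a
    have huz : u ≠ z := by rintro rfl; exact ha hu.symm
    rw [indicator_of_notMem ha, add_zero, hu]
    exact (cTransform_le u).trans (by linarith [hpq u huz])

end CTransform

section Measure

variable {α ι : Type*} [MeasurableSpace α] {μ : Measure α}
  {f : α → ι → ℝ} {p q : ι → ℝ} {z : ι}

lemma aedisjoint_cell (hlevel : ∀ t z u, z ≠ u → μ {a | f a z - f a u = t} = 0) {u : ι}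
    (hzu : z ≠ u) : AEDisjoint μ (cell f p z) (cell f p u) :=
  measure_mono_null (cell_inter_cell_subset z u) (hlevel _ z u hzu)

variable [Finite ι]

lemma measurable_cTransform (hf : ∀ u, Measurable (f · u)) (p : ι → ℝ) :
    Measurable (cTransform f p) :=
  Measurable.iInf fun u => (hf u).add_const (p u)

lemma measurableSet_cell (hf : ∀ u, Measurable (f · u)) (p : ι → ℝ) (z : ι) :
    MeasurableSet (cell f p z) :=
  measurableSet_eq_fun ((hf z).add_const _) (measurable_cTransform hf p)

lemma integrable_cTransform [Nonempty ι] [IsFiniteMeasure μ] (hf : ∀ u, Measurable (f · u))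
    (hfb : ∃ M, ∀ a u, |f a u| ≤ M) (p : ι → ℝ) : Integrable (cTransform f p) μ := by
  obtain ⟨M, hM⟩ := hfb
  obtain ⟨C, hC⟩ := (finite_range fun u => |p u|).bddAbove
  refine integrable_of_forall_abs_le (measurable_cTransform hf p) ⟨M + C, fun a => ?_⟩
  exact abs_ciInf_le fun u => (abs_add_le _ _).trans (add_le_add (hM a u) (hC (mem_range_self u)))

/-- On the cell of `z` the cost to `z` is the c-transform shifted by `p z`. -/
lemma setIntegral_cell [Nonempty ι] [IsFiniteMeasure μ] (hf : ∀ u, Measurable (f · u))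
    (hfb : ∃ M, ∀ a u, |f a u| ≤ M) (p : ι → ℝ) (z : ι) :
    ∫ a in cell f p z, f a z ∂μ
      = ∫ a in cell f p z, cTransform f p a ∂μ - p z * μ.real (cell f p z) := by
  have hcell : EqOn (f · z) (fun a => cTransform f p a - p z) (cell f p z) := fun a ha => by
    change f a z + p z = _ at ha
    simp only
    linarith
  rw [setIntegral_congr_fun (measurableSet_cell hf p z) hcell,
    integral_sub (integrable_cTransform hf hfb p).integrableOn (integrableOn_const (by simp)),
    setIntegral_const, smul_eq_mul, mul_comm]

lemma integral_cTransform_add_le [IsFiniteMeasure μ] [Nonempty ι] (hf : ∀ u, Measurable (f · u))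
    (hfb : ∃ M, ∀ a u, |f a u| ≤ M) (hpq : ∀ u ≠ z, p u ≤ q u) :
    ∫ a, cTransform f p a ∂μ + (q z - p z) * μ.real (cell f q z) ≤ ∫ a, cTransform f q a ∂μ := by
  have hind : Integrable ((cell f q z).indicator fun _ => q z - p z) μ :=
    (integrable_const _).indicator (measurableSet_cell hf q z)
  calc ∫ a, cTransform f p a ∂μ + (q z - p z) * μ.real (cell f q z)
      = ∫ a, cTransform f p a + (cell f q z).indicator (fun _ => q z - p z) a ∂μ := by
        rw [integral_add (integrable_cTransform hf hfb p) hind,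
          integral_indicator_const _ (measurableSet_cell hf q z), smul_eq_mul, mul_comm]
    _ ≤ ∫ a, cTransform f q a ∂μ :=
        integral_mono ((integrable_cTransform hf hfb p).add hind) (integrable_cTransform hf hfb q)
          (cTransform_add_indicator_le hpq)

lemma sum_restrict_cell [Fintype ι] [Nonempty ι] (hf : ∀ u, Measurable (f · u))
    (hlevel : ∀ t z u, z ≠ u → μ {a | f a z - f a u = t} = 0) (p : ι → ℝ) :
    ∑ i, μ.restrict (cell f p i) = μ := by
  rw [← Measure.sum_fintype, ← Measure.restrict_iUnion_ae (fun _ _ => aedisjoint_cell hlevel)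
    fun i => (measurableSet_cell hf p i).nullMeasurableSet,
    iUnion_eq_univ_iff.2 (exists_mem_cell f p), Measure.restrict_univ]

end Measure

section Balance

variable {α ι : Type*} {f : α → ι → ℝ} {p : ι → ℝ} {z : ι}

lemma mem_cell_update_iff [DecidableEq ι] [Finite ι] {a : α} {s : ℝ} :
    a ∈ cell f (update p z s) z ↔ ∀ u ≠ z, f a z + s ≤ f a u + p u := by
  rw [mem_cell_iff, update_self]
  refine forall_congr' fun u => ?_
  rcases eq_or_ne u z with rfl | hu
  · simp
  · simp [hu]

lemma antitone_cell_update [DecidableEq ι] [Finite ι] :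
    Antitone fun s => cell f (update p z s) z := fun _ _ hs _ ha =>
  mem_cell_update_iff.2 fun u hu => (add_le_add_right hs _).trans (mem_cell_update_iff.1 ha u hu)

lemma cell_subset_iUnion_cell_update [DecidableEq ι] [Finite ι] :
    cell f p z ⊆ (⋃ n : ℕ, cell f (update p z (p z + 1 / (n + 1))) z)
      ∪ ⋃ (u) (_ : u ≠ z), cell f p z ∩ cell f p u := by
  intro a ha
  by_cases hshared : ∃ u ≠ z, a ∈ cell f p u
  · obtain ⟨u, hu, hau⟩ := hshared
    exact Or.inr (mem_iUnion₂.2 ⟨u, hu, ha, hau⟩)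
  simp only [not_exists, not_and] at hshared
  have hlt : ∀ u ≠ z, f a z + p z < f a u + p u := fun u hu =>
    (mem_cell_iff.1 ha u).lt_of_ne fun heq =>
      hshared u hu (mem_cell_iff.2 fun v => heq ▸ mem_cell_iff.1 ha v)
  have hev : ∀ᶠ n : ℕ in atTop, ∀ u, u ≠ z → f a z + (p z + 1 / (n + 1)) ≤ f a u + p u := by
    refine eventually_all.2 fun u => ?_
    rcases eq_or_ne u z with rfl | hu
    · exact Eventually.of_forall fun _ h => absurd rfl h
    filter_upwards [tendsto_one_div_add_atTop_nhds_zero_nat.eventually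
      (gt_mem_nhds (sub_pos.2 (hlt u hu)))] with n hn _
    linarith
  obtain ⟨n, hn⟩ := hev.exists
  exact Or.inl (mem_iUnion.2 ⟨n, mem_cell_update_iff.2 hn⟩)

lemma iInter_cell_update_subset [DecidableEq ι] [Finite ι] :
    ⋂ n : ℕ, cell f (update p z (p z - 1 / (n + 1))) z ⊆ cell f p z := by
  intro a ha
  refine mem_cell_iff.2 fun u => ?_
  rcases eq_or_ne u z with rfl | hu
  · exact le_rfl
  refine le_of_tendsto' (x := atTop) ?_ fun n =>
    mem_cell_update_iff.1 (mem_iInter.1 ha n) u hu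
  simpa using tendsto_const_nhds.add (tendsto_const_nhds.sub
    (tendsto_one_div_add_atTop_nhds_zero_nat (𝕜 := ℝ)))

lemma measure_iUnion_le_measure_iInter {β : Type*} [MeasurableSpace α] [MeasurableSpace β]
    {μ : Measure α} {ν : Measure β} [IsFiniteMeasure ν] {E : ℕ → Set α} {C : ℕ → Set β}
    (hE : Monotone E) (hC : Antitone C) (hCm : ∀ n, NullMeasurableSet (C n) ν)
    (h : ∀ n, μ (E n) ≤ ν (C n)) : μ (⋃ n, E n) ≤ ν (⋂ n, C n) := by
  rw [hE.measure_iUnion, hC.measure_iInter hCm ⟨0, measure_ne_top _ _⟩]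
  refine iSup_le fun n => le_iInf fun m => ?_
  calc μ (E n) ≤ μ (E (max n m)) := measure_mono (hE (le_max_left n m))
    _ ≤ ν (C (max n m)) := h _
    _ ≤ ν (C m) := measure_mono (hC (le_max_right n m))

noncomputable def dualObjective {β : Type*} [MeasurableSpace α] [MeasurableSpace β]
    (μ : Measure α) (ν : Measure β) (f : α → ι → ℝ) (g : β → ι → ℝ) (p : ι → ℝ) : ℝ :=
  ∫ a, cTransform f p a ∂μ + ∫ b, cTransform g (-p) b ∂ν

lemma dualObjective_swap {β : Type*} [MeasurableSpace α] [MeasurableSpace β]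
    (μ : Measure α) (ν : Measure β) (f : α → ι → ℝ) (g : β → ι → ℝ) (p : ι → ℝ) :
    dualObjective ν μ g f p = dualObjective μ ν f g (-p) := by
  rw [dualObjective, dualObjective, neg_neg, add_comm]

variable [Nonempty ι] {β : Type*} [MeasurableSpace α] [MeasurableSpace β]
  {μ : Measure α} {ν : Measure β} [IsFiniteMeasure μ] [IsFiniteMeasure ν] {g : β → ι → ℝ}

/-- First-order optimality of `p` in the direction of `q - p`, which is supported on `z`. -/
lemma measureReal_cell_le_of_isMaxOn [Finite ι] (hf : ∀ u, Measurable (f · u))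
    (hfb : ∃ M, ∀ a u, |f a u| ≤ M) (hg : ∀ u, Measurable (g · u))
    (hgb : ∃ M, ∀ b u, |g b u| ≤ M) (hmax : IsMaxOn (dualObjective μ ν f g) univ p)
    {q : ι → ℝ} (hq : ∀ u ≠ z, q u = p u) (hpq : p z < q z) :
    μ.real (cell f q z) ≤ ν.real (cell g (-q) z) := by
  have hμ := integral_cTransform_add_le (μ := μ) hf hfb (z := z) fun u hu => (hq u hu).ge
  have hν := integral_cTransform_add_le (μ := ν) hg hgb (z := z) (p := -p) (q := -q)
    fun u hu => by simp [hq u hu]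
  have hmaxq := isMaxOn_univ_iff.1 hmax q
  simp only [dualObjective, Pi.neg_apply] at hν hmaxq
  have : (q z - p z) * μ.real (cell f q z) ≤ (q z - p z) * ν.real (cell g (-q) z) := by linarith
  exact le_of_mul_le_mul_left this (sub_pos.2 hpq)

/-- Push the potential of `z` up by `1 / (n + 1)` and let `n → ∞`; the points that the limit
misses lie on the common boundary of two cells, which is `μ`-null. -/
lemma measure_cell_le_of_isMaxOn [Finite ι] (hf : ∀ u, Measurable (f · u))
    (hfb : ∃ M, ∀ a u, |f a u| ≤ M) (hg : ∀ u, Measurable (g · u))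
    (hgb : ∃ M, ∀ b u, |g b u| ≤ M) (hlevel : ∀ t z u, z ≠ u → μ {a | f a z - f a u = t} = 0)
    (hmax : IsMaxOn (dualObjective μ ν f g) univ p) (z : ι) :
    μ (cell f p z) ≤ ν (cell g (-p) z) := by
  classical
  set q : ℕ → ι → ℝ := fun n => update p z (p z + 1 / (n + 1))
  have hneg : ∀ n, -q n = update (-p) z ((-p) z - 1 / (n + 1)) := fun n => by
    rw [← update_neg, Pi.neg_apply, neg_add, sub_eq_add_neg]
  have hmono : Monotone fun n => cell f (q n) z := fun n m h =>
    antitone_cell_update (f := f) (p := p) (z := z)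
      (show p z + 1 / (m + 1) ≤ p z + 1 / (n + 1) by gcongr)
  have hanti : Antitone fun n => cell g (-q n) z := fun n m h => by
    simp only [hneg]
    exact antitone_cell_update (f := g) (p := -p) (z := z)
      (show (-p) z - 1 / (n + 1) ≤ (-p) z - 1 / (m + 1) by gcongr)
  have hshared : μ (⋃ (u) (_ : u ≠ z), cell f p z ∩ cell f p u) = 0 :=
    measure_iUnion_null fun u => measure_iUnion_null fun hu =>
      aedisjoint_cell hlevel (Ne.symm hu)
  have hstep : ∀ n, μ (cell f (q n) z) ≤ ν (cell g (-q n) z) := fun n => by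
    have := measureReal_cell_le_of_isMaxOn hf hfb hg hgb hmax (q := q n)
      (fun u hu => update_of_ne hu _ _) (by simp [q]; positivity)
    exact (ENNReal.toReal_le_toReal (measure_ne_top _ _) (measure_ne_top _ _)).1 this
  calc μ (cell f p z)
      ≤ μ ((⋃ n, cell f (q n) z) ∪ ⋃ (u) (_ : u ≠ z), cell f p z ∩ cell f p u) :=
        measure_mono cell_subset_iUnion_cell_update
    _ ≤ μ (⋃ n, cell f (q n) z) := (measure_union_le _ _).trans_eq (by rw [hshared, add_zero])
    _ ≤ ν (⋂ n, cell g (-q n) z) := measure_iUnion_le_measure_iInter hmono hanti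
        (fun n => (measurableSet_cell hg _ z).nullMeasurableSet) hstep
    _ ≤ ν (cell g (-p) z) := by
        simp_rw [hneg]
        exact measure_mono iInter_cell_update_subset

lemma measure_cell_eq_of_isMaxOn [Finite ι] (hf : ∀ u, Measurable (f · u))
    (hfb : ∃ M, ∀ a u, |f a u| ≤ M) (hg : ∀ u, Measurable (g · u))
    (hgb : ∃ M, ∀ b u, |g b u| ≤ M) (hlevelμ : ∀ t z u, z ≠ u → μ {a | f a z - f a u = t} = 0)
    (hlevelν : ∀ t z u, z ≠ u → ν {b | g b z - g b u = t} = 0)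
    (hmax : IsMaxOn (dualObjective μ ν f g) univ p) (z : ι) :
    μ (cell f p z) = ν (cell g (-p) z) := by
  have hmax' : IsMaxOn (dualObjective ν μ g f) univ (-p) := isMaxOn_univ_iff.2 fun q => by
    rw [dualObjective_swap μ ν f g q, dualObjective_swap μ ν f g (-p), neg_neg]
    exact isMaxOn_univ_iff.1 hmax (-q)
  have := measure_cell_le_of_isMaxOn hg hgb hf hfb hlevelν hmax' z
  rw [neg_neg] at this
  exact (measure_cell_le_of_isMaxOn hf hfb hg hgb hlevelμ hmax z).antisymm this

/-- Shifting each cell cost by `p i` turns the cell costs into the dual objective, the shifts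
cancelling because matched cells carry equal mass. -/
lemma sum_setIntegral_cell_eq_dualObjective [Fintype ι] (hf : ∀ u, Measurable (f · u))
    (hfb : ∃ M, ∀ a u, |f a u| ≤ M) (hg : ∀ u, Measurable (g · u))
    (hgb : ∃ M, ∀ b u, |g b u| ≤ M) (hlevelμ : ∀ t z u, z ≠ u → μ {a | f a z - f a u = t} = 0)
    (hlevelν : ∀ t z u, z ≠ u → ν {b | g b z - g b u = t} = 0)
    (hmass : ∀ i, μ (cell f p i) = ν (cell g (-p) i)) :
    ∑ i, (∫ a in cell f p i, f a i ∂μ + ∫ b in cell g (-p) i, g b i ∂ν)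
      = dualObjective μ ν f g p := by
  have hμ : ∑ i, ∫ a in cell f p i, cTransform f p a ∂μ = ∫ a, cTransform f p a ∂μ := by
    rw [← integral_finsetSum_measure fun i _ => (integrable_cTransform hf hfb p).restrict,
      sum_restrict_cell hf hlevelμ p]
  have hν : ∑ i, ∫ b in cell g (-p) i, cTransform g (-p) b ∂ν = ∫ b, cTransform g (-p) b ∂ν := by
    rw [← integral_finsetSum_measure fun i _ => (integrable_cTransform hg hgb (-p)).restrict,
      sum_restrict_cell hg hlevelν (-p)]
  have hmassReal : ∀ i, μ.real (cell f p i) = ν.real (cell g (-p) i) := fun i => by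
    rw [measureReal_def, measureReal_def, hmass]
  simp_rw [setIntegral_cell hf hfb, setIntegral_cell hg hgb, hmassReal]
  rw [dualObjective, ← hμ, ← hν, ← Finset.sum_add_distrib]
  refine Finset.sum_congr rfl fun i _ => ?_
  simp only [Pi.neg_apply]
  ring

end Balance

section Coupling

variable {X Y ι : Type*} [MeasurableSpace X] [MeasurableSpace Y] {μ : Measure X} {ν : Measure Y}

lemma integral_add_comp_fst_snd {π : Measure (X × Y)} (h1 : π.map Prod.fst = μ)
    (h2 : π.map Prod.snd = ν) {φ : X → ℝ} {ψ : Y → ℝ} (hφ : Integrable φ μ) (hψ : Integrable ψ ν) :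
    ∫ q, φ q.1 + ψ q.2 ∂π = ∫ x, φ x ∂μ + ∫ y, ψ y ∂ν := by
  subst h1 h2
  have hφπ : Integrable (fun q : X × Y => φ q.1) π := hφ.comp_measurable measurable_fst
  have hψπ : Integrable (fun q : X × Y => ψ q.2) π := hψ.comp_measurable measurable_snd
  rw [integral_add hφπ hψπ,
    integral_map measurable_fst.aemeasurable hφ.aestronglyMeasurable,
    integral_map measurable_snd.aemeasurable hψ.aestronglyMeasurable]

/-- When `μ s = 0` the factor `(μ s)⁻¹ = ∞` multiplies the zero measure. -/
noncomputable def blockCoupling (μ : Measure X) (ν : Measure Y) (s : Set X) (t : Set Y) :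
    Measure (X × Y) :=
  (μ s)⁻¹ • (μ.restrict s).prod (ν.restrict t)

noncomputable def cellCoupling [Fintype ι] (μ : Measure X) (ν : Measure Y) (A : ι → Set X)
    (B : ι → Set Y) : Measure (X × Y) :=
  ∑ i, blockCoupling μ ν (A i) (B i)

variable [IsFiniteMeasure μ] [IsFiniteMeasure ν] {s : Set X} {t : Set Y}

lemma map_fst_blockCoupling (h : μ s = ν t) :
    (blockCoupling μ ν s t).map Prod.fst = μ.restrict s := by
  rw [blockCoupling, Measure.map_smul, Measure.map_fst_prod, Measure.restrict_apply_univ, ← h,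
    smul_smul]
  rcases eq_or_ne (μ s) 0 with h0 | h0
  · simp [Measure.restrict_eq_zero.2 h0]
  · rw [ENNReal.inv_mul_cancel h0 (measure_ne_top μ s), one_smul]

lemma map_snd_blockCoupling (h : μ s = ν t) :
    (blockCoupling μ ν s t).map Prod.snd = ν.restrict t := by
  rw [blockCoupling, Measure.map_smul, Measure.map_snd_prod, Measure.restrict_apply_univ,
    smul_smul]
  rcases eq_or_ne (μ s) 0 with h0 | h0
  · simp [Measure.restrict_eq_zero.2 (h ▸ h0)]
  · rw [ENNReal.inv_mul_cancel h0 (measure_ne_top μ s), one_smul]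

lemma isFiniteMeasure_blockCoupling (h : μ s = ν t) : IsFiniteMeasure (blockCoupling μ ν s t) :=
  have : IsFiniteMeasure ((blockCoupling μ ν s t).map Prod.fst) := by
    rw [map_fst_blockCoupling h]; infer_instance
  Measure.isFiniteMeasure_of_map measurable_fst.aemeasurable

variable [Fintype ι] {A : ι → Set X} {B : ι → Set Y}

lemma map_fst_cellCoupling (hAB : ∀ i, μ (A i) = ν (B i)) (hA : ∑ i, μ.restrict (A i) = μ) :
    (cellCoupling μ ν A B).map Prod.fst = μ := by
  rw [cellCoupling, Measure.map_finset_sum' measurable_fst.aemeasurable]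
  simp_rw [map_fst_blockCoupling (hAB _)]
  exact hA

lemma map_snd_cellCoupling (hAB : ∀ i, μ (A i) = ν (B i)) (hB : ∑ i, ν.restrict (B i) = ν) :
    (cellCoupling μ ν A B).map Prod.snd = ν := by
  rw [cellCoupling, Measure.map_finset_sum' measurable_snd.aemeasurable]
  simp_rw [map_snd_blockCoupling (hAB _)]
  exact hB

lemma integral_cellCoupling_le (hAB : ∀ i, μ (A i) = ν (B i)) {c : X → Y → ℝ}
    (hc : Measurable fun q : X × Y => c q.1 q.2) (hcb : ∃ M, ∀ x y, |c x y| ≤ M)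
    {h₁ : X → ι → ℝ} {h₂ : Y → ι → ℝ} (hh₁ : ∀ i, Measurable (h₁ · i))
    (hh₁b : ∃ M, ∀ x i, |h₁ x i| ≤ M) (hh₂ : ∀ i, Measurable (h₂ · i))
    (hh₂b : ∃ M, ∀ y i, |h₂ y i| ≤ M) (hle : ∀ x y i, c x y ≤ h₁ x i + h₂ y i) :
    ∫ q, c q.1 q.2 ∂(cellCoupling μ ν A B)
      ≤ ∑ i, (∫ x in A i, h₁ x i ∂μ + ∫ y in B i, h₂ y i ∂ν) := by
  obtain ⟨M, hM⟩ := hcb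
  obtain ⟨M₁, hM₁⟩ := hh₁b
  obtain ⟨M₂, hM₂⟩ := hh₂b
  have : ∀ i, IsFiniteMeasure (blockCoupling μ ν (A i) (B i)) :=
    fun i => isFiniteMeasure_blockCoupling (hAB i)
  rw [cellCoupling, integral_finsetSum_measure fun i _ =>
    integrable_of_forall_abs_le hc ⟨M, fun q => hM q.1 q.2⟩]
  refine Finset.sum_le_sum fun i _ => ?_
  rw [← integral_add_comp_fst_snd (map_fst_blockCoupling (hAB i)) (map_snd_blockCoupling (hAB i))
    (integrable_of_forall_abs_le (hh₁ i) ⟨M₁, (hM₁ · i)⟩)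
    (integrable_of_forall_abs_le (hh₂ i) ⟨M₂, (hM₂ · i)⟩)]
  exact integral_mono (integrable_of_forall_abs_le hc ⟨M, fun q => hM q.1 q.2⟩)
    (integrable_of_forall_abs_le (((hh₁ i).comp measurable_fst).add ((hh₂ i).comp measurable_snd))
      ⟨M₁ + M₂, fun q => (abs_add_le _ _).trans (add_le_add (hM₁ _ _) (hM₂ _ _))⟩)
    fun q => hle q.1 q.2 i

end Coupling

section Kantorovich

variable {X Y : Type*} [MeasurableSpace X] [MeasurableSpace Y] {μ : Measure X} {ν : Measure Y}
  {c : X → Y → ℝ}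

lemma kant_le_integral (hcb : ∃ M, ∀ x y, |c x y| ≤ M) {π : Measure (X × Y)}
    [IsProbabilityMeasure π] (h1 : π.map Prod.fst = μ) (h2 : π.map Prod.snd = ν) :
    kant μ ν c ≤ ∫ q, c q.1 q.2 ∂π := by
  obtain ⟨M, hM⟩ := hcb
  refine csInf_le ⟨-M, ?_⟩ ⟨π, inferInstance, h1, h2, rfl⟩
  rintro t ⟨π', hπ', -, -, rfl⟩
  have := norm_integral_le_of_norm_le_const (μ := π') (f := fun q : X × Y => c q.1 q.2)
    (ae_of_all _ fun q => hM q.1 q.2)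
  rw [probReal_univ, mul_one] at this
  exact neg_le_of_abs_le this

lemma le_kant_of_add_le [IsProbabilityMeasure μ] [IsProbabilityMeasure ν]
    (hc : Measurable fun q : X × Y => c q.1 q.2) (hcb : ∃ M, ∀ x y, |c x y| ≤ M)
    {φ : X → ℝ} {ψ : Y → ℝ} (hφ : Integrable φ μ) (hψ : Integrable ψ ν)
    (hle : ∀ x y, φ x + ψ y ≤ c x y) : ∫ x, φ x ∂μ + ∫ y, ψ y ∂ν ≤ kant μ ν c := by
  obtain ⟨M, hM⟩ := hcb
  refine le_csInf ⟨_, μ.prod ν, inferInstance, by simp, by simp, rfl⟩ ?_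
  rintro t ⟨π, hπ, h1, h2, rfl⟩
  rw [← integral_add_comp_fst_snd h1 h2 hφ hψ]
  subst h1 h2
  exact integral_mono ((hφ.comp_measurable measurable_fst).add (hψ.comp_measurable measurable_snd))
    (integrable_of_forall_abs_le hc ⟨M, fun q => hM q.1 q.2⟩) fun q => hle q.1 q.2

end Kantorovich

end SemiDiscrete

open SemiDiscrete

theorem stmt_12_general
    {X Y Z : Type*} [TopologicalSpace X] [MeasurableSpace X] [BorelSpace X]
    [TopologicalSpace Y] [MeasurableSpace Y] [BorelSpace Y]
    [MetricSpace Z]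
    (μ : Measure X) (ν : Measure Y) [IsProbabilityMeasure μ] [IsProbabilityMeasure ν]
    (c1 : X → Z → ℝ) (c2 : Z → Y → ℝ)
    (hc1 : Continuous fun q : X × Z => c1 q.1 q.2) (hb1 : ∃ M, ∀ x w, |c1 x w| ≤ M)
    (hc2 : Continuous fun q : Z × Y => c2 q.1 q.2) (hb2 : ∃ M, ∀ w y, |c2 w y| ≤ M)
    (Zm : Finset Z) (hZm : Zm.Nonempty)
    (hlevelX : ∀ (t : ℝ) (z z' : Zm), z ≠ z' → μ {x | c1 x z - c1 x z' = t} = 0)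
    (hlevelY : ∀ (t : ℝ) (z z' : Zm), z ≠ z' → ν {y | c2 z y - c2 z' y = t} = 0)
    (p0 : Zm → ℝ)
    (hp0 : ∀ p : Zm → ℝ,
      (∫ x, (⨅ z : Zm, c1 x z + p z) ∂μ) + (∫ y, (⨅ z : Zm, c2 z y + (-p) z) ∂ν)
        ≤ (∫ x, (⨅ z : Zm, c1 x z + p0 z) ∂μ) + ∫ y, (⨅ z : Zm, c2 z y + (-p0) z) ∂ν)
    (ζ : Zm → Z)
    (hζ : ∀ z : Zm, ∀ w : Z,
      (∫ x in {x : X | c1 x z + p0 z = ⨅ u : Zm, (c1 x u + p0 u)}, c1 x (ζ z) ∂μ)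
        + (∫ y in {y : Y | c2 z y + (-p0) z = ⨅ u : Zm, (c2 u y + (-p0) u)}, c2 (ζ z) y ∂ν)
      ≤ (∫ x in {x : X | c1 x z + p0 z = ⨅ u : Zm, (c1 x u + p0 u)}, c1 x w ∂μ)
        + ∫ y in {y : Y | c2 z y + (-p0) z = ⨅ u : Zm, (c2 u y + (-p0) u)}, c2 w y ∂ν) :
    kant μ ν (fun x y => ⨅ z : Zm, (c1 x (ζ z) + c2 (ζ z) y))
      ≤ kant μ ν (fun x y => ⨅ z : Zm, (c1 x z + c2 z y)) := by
  have := hZm.to_subtype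
  obtain ⟨M₁, hM₁⟩ := hb1
  obtain ⟨M₂, hM₂⟩ := hb2
  have hc1m (w : Z) : Measurable (c1 · w) :=
    (hc1.comp (continuous_id.prodMk continuous_const)).measurable
  have hc2m (w : Z) : Measurable (c2 w ·) :=
    (hc2.comp (continuous_const.prodMk continuous_id)).measurable
  have hcost (h : Zm → Z) : Measurable fun q : X × Y => ⨅ u, c1 q.1 (h u) + c2 (h u) q.2 :=
    .iInf fun u => ((hc1m _).comp measurable_fst).add ((hc2m _).comp measurable_snd)
  have hcostb (h : Zm → Z) : ∃ M, ∀ x y, |⨅ u, c1 x (h u) + c2 (h u) y| ≤ M :=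
    ⟨M₁ + M₂, fun x y => abs_ciInf_le fun u =>
      (abs_add_le _ _).trans (add_le_add (hM₁ _ _) (hM₂ _ _))⟩
  set f : X → Zm → ℝ := fun x u => c1 x u
  set g : Y → Zm → ℝ := fun y u => c2 u y
  have hf (u : Zm) : Measurable (f · u) := hc1m u
  have hg (u : Zm) : Measurable (g · u) := hc2m u
  have hfb : ∃ M, ∀ x u, |f x u| ≤ M := ⟨M₁, fun x u => hM₁ x u⟩
  have hgb : ∃ M, ∀ y u, |g y u| ≤ M := ⟨M₂, fun y u => hM₂ u y⟩
  have hmass := measure_cell_eq_of_isMaxOn hf hfb hg hgb hlevelX hlevelY (isMaxOn_univ_iff.2 hp0)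
  set π := cellCoupling μ ν (cell f p0) (cell g (-p0))
  have hπ₁ : π.map Prod.fst = μ := map_fst_cellCoupling hmass (sum_restrict_cell hf hlevelX p0)
  have hπ₂ : π.map Prod.snd = ν := map_snd_cellCoupling hmass (sum_restrict_cell hg hlevelY (-p0))
  have : IsProbabilityMeasure (π.map Prod.fst) := hπ₁ ▸ inferInstance
  have : IsProbabilityMeasure π := Measure.isProbabilityMeasure_of_map Prod.fst
  calc kant μ ν (fun x y => ⨅ z : Zm, (c1 x (ζ z) + c2 (ζ z) y))
      ≤ ∫ q, ⨅ z : Zm, (c1 q.1 (ζ z) + c2 (ζ z) q.2) ∂π := kant_le_integral (hcostb ζ) hπ₁ hπ₂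
    _ ≤ ∑ z, (∫ x in cell f p0 z, c1 x (ζ z) ∂μ + ∫ y in cell g (-p0) z, c2 (ζ z) y ∂ν) :=
        integral_cellCoupling_le hmass (hcost ζ) (hcostb ζ) (fun _ => hc1m _)
          ⟨M₁, fun _ _ => hM₁ _ _⟩ (fun _ => hc2m _) ⟨M₂, fun _ _ => hM₂ _ _⟩
          fun x y z => ciInf_le (finite_range _).bddBelow z
    _ ≤ ∑ z, (∫ x in cell f p0 z, f x z ∂μ + ∫ y in cell g (-p0) z, g y z ∂ν) :=
        Finset.sum_le_sum fun z _ => hζ z z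
    _ = dualObjective μ ν f g p0 :=
        sum_setIntegral_cell_eq_dualObjective hf hfb hg hgb hlevelX hlevelY hmass
    _ ≤ kant μ ν (fun x y => ⨅ z : Zm, (c1 x z + c2 z y)) :=
        le_kant_of_add_le (hcost Subtype.val) (hcostb Subtype.val) (integrable_cTransform hf hfb p0)
          (integrable_cTransform hg hgb (-p0)) fun x y => cTransform_add_cTransform_neg_le g y

/-- under Assumptions (a) and (b), if `p₀` maximizes
`Ξ(p) = Ξ_μ(p) + Ξ_ν(−p)` and each `ζ(z)` minimizes
`ζ ↦ ∫_{A_z(p₀)} c¹(x,ζ) dμ + ∫_{B_z(−p₀)} c²(ζ,y) dν`, then the new center set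
improves the cost: `c^{Z_m^{new}}(μ,ν) ≤ c^{Z_m}(μ,ν)`. -/
theorem stmt_12
    {X Y Z : Type*} [TopologicalSpace X] [PolishSpace X] [MeasurableSpace X] [BorelSpace X]
    [TopologicalSpace Y] [PolishSpace Y] [MeasurableSpace Y] [BorelSpace Y]
    [MetricSpace Z] [CompactSpace Z]
    (μ : Measure X) (ν : Measure Y) [IsProbabilityMeasure μ] [IsProbabilityMeasure ν]
    (c1 : X → Z → ℝ) (c2 : Z → Y → ℝ)
    (hc1 : Continuous fun q : X × Z => c1 q.1 q.2) (hb1 : ∃ M, ∀ x w, |c1 x w| ≤ M)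
    (hc2 : Continuous fun q : Z × Y => c2 q.1 q.2) (hb2 : ∃ M, ∀ w y, |c2 w y| ≤ M)
    (Zm : Finset Z) (hZm : Zm.Nonempty)
    (hatomlessX : ∀ x : X, μ {x} = 0)
    (hlevelX : ∀ (t : ℝ) (z z' : Zm), z ≠ z' → μ {x | c1 x z - c1 x z' = t} = 0)
    (hatomlessY : ∀ y : Y, ν {y} = 0)
    (hlevelY : ∀ (t : ℝ) (z z' : Zm), z ≠ z' → ν {y | c2 z y - c2 z' y = t} = 0)
    (p0 : Zm → ℝ)
    (hp0 : ∀ p : Zm → ℝ,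
      (∫ x, (⨅ z : Zm, c1 x z + p z) ∂μ) + (∫ y, (⨅ z : Zm, c2 z y + (-p) z) ∂ν)
        ≤ (∫ x, (⨅ z : Zm, c1 x z + p0 z) ∂μ) + ∫ y, (⨅ z : Zm, c2 z y + (-p0) z) ∂ν)
    (ζ : Zm → Z)
    (hζ : ∀ z : Zm, ∀ w : Z,
      (∫ x in {x : X | c1 x z + p0 z = ⨅ u : Zm, (c1 x u + p0 u)}, c1 x (ζ z) ∂μ)
        + (∫ y in {y : Y | c2 z y + (-p0) z = ⨅ u : Zm, (c2 u y + (-p0) u)}, c2 (ζ z) y ∂ν)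
      ≤ (∫ x in {x : X | c1 x z + p0 z = ⨅ u : Zm, (c1 x u + p0 u)}, c1 x w ∂μ)
        + ∫ y in {y : Y | c2 z y + (-p0) z = ⨅ u : Zm, (c2 u y + (-p0) u)}, c2 w y ∂ν) :
    kant μ ν (fun x y => ⨅ z : Zm, (c1 x (ζ z) + c2 (ζ z) y))
      ≤ kant μ ν (fun x y => ⨅ z : Zm, (c1 x z + c2 z y)) :=
  stmt_12_general μ ν c1 c2 hc1 hb1 hc2 hb2 Zm hZm hlevelX hlevelY p0 hp0 ζ hζ
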